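/- Let N be a rooted phylogenetic network on a finite set X. Then the normalisation Ñ of N equals N (as a directed graph, with the same vertex set and arc set) if and only if N is a normal network. -/

import Mathlib

/-!
Formalisation framework for rooted phylogenetic networks.

A network is represented as a directed graph on an ambient vertex type `V`:
a vertex set `verts`, a root vertex `root`, and an arc relation `arc`.
-/

structure Net (V : Type*) where
  verts : Set V
  root : V
  arc : V → V → Prop

namespace Net

variable {V : Type*} {W : Type*}

/-- `N.reach u v` means there is a (possibly empty) directed path from `u` to `v`. -/
def reach (N : Net V) : V → V → Prop := Relation.ReflTransGen N.arc

/-- The in-degree of a vertex. -/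
noncomputable def inDeg (N : Net V) (v : V) : ℕ := {u | N.arc u v}.ncard

/-- The out-degree of a vertex. -/
noncomputable def outDeg (N : Net V) (v : V) : ℕ := {w | N.arc v w}.ncard

/-- The leaves of `N`: the vertices of out-degree 0. -/
def leaves (N : Net V) : Set V := {v ∈ N.verts | N.outDeg v = 0}

/-- `N.IsPathFrom u v l` : the list `l` is a directed path in `N` from `u` to `v`
(consecutive entries joined by arcs; a one-element list is the empty path). -/
def IsPathFrom (N : Net V) (u v : V) (l : List V) : Prop :=
  l.Chain' N.arc ∧ l.head? = some u ∧ l.getLast? = some v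

/-- A vertex is visible if some leaf is such that every directed path from the
root to that leaf passes through the vertex. -/
def Visible (N : Net V) (x : V) : Prop :=
  x ∈ N.verts ∧ ∃ y ∈ N.leaves, ∀ l : List V, N.IsPathFrom N.root y l → x ∈ l

/-- A subdividing vertex is one of in-degree 1 and out-degree 1. -/
def Subdividing (N : Net V) (v : V) : Prop := N.inDeg v = 1 ∧ N.outDeg v = 1

/-- The digraph `Cov(N)` on the visible vertices of `N`: an arc `(u,v)` whenever
`u ≠ v`, `u →_N v`, and no visible vertex lies strictly between `u` and `v`. -/
def cov (N : Net V) : Net V where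
  verts := {v | N.Visible v}
  root := N.root
  arc u v := N.Visible u ∧ N.Visible v ∧ u ≠ v ∧ N.reach u v ∧
    ¬ ∃ w, N.Visible w ∧ w ≠ u ∧ w ≠ v ∧ N.reach u w ∧ N.reach w v

/-- The normalisation `Ñ` of `N`: obtained from `Cov(N)` by suppressing every
subdividing vertex.  Its vertices are the visible vertices of `N` that are not
subdividing in `Cov(N)`, with an arc `(u,v)` whenever `Cov(N)` has a directed path
from `u` to `v` (of length at least one) all of whose interior vertices are
subdividing in `Cov(N)`. -/
def normalise (N : Net V) : Net V where
  verts := {v | N.Visible v ∧ ¬ N.cov.Subdividing v}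
  root := N.root
  arc u v := (N.Visible u ∧ ¬ N.cov.Subdividing u) ∧ (N.Visible v ∧ ¬ N.cov.Subdividing v) ∧
    ∃ l : List V, N.cov.IsPathFrom u v l ∧ 2 ≤ l.length ∧
      ∀ w ∈ l.tail.dropLast, N.cov.Subdividing w

/-- `N` is a rooted phylogenetic network on the finite nonempty leaf set `X`. -/
structure IsPhylo (N : Net V) (X : Set V) : Prop where
  finite : N.verts.Finite
  nonempty : X.Nonempty
  arc_mem : ∀ ⦃u v : V⦄, N.arc u v → u ∈ N.verts ∧ v ∈ N.verts
  acyclic : ∀ ⦃u v : V⦄, N.arc u v → ¬ N.reach v u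
  root_mem : N.root ∈ N.verts
  root_inDeg : N.inDeg N.root = 0
  root_unique : ∀ v ∈ N.verts, N.inDeg v = 0 → v = N.root
  leaves_eq : N.leaves = X
  leaf_inDeg : ∀ x ∈ X, N.inDeg x = 1
  interior_deg : ∀ v ∈ N.verts, v ≠ N.root → v ∉ X →
    (N.inDeg v = 1 ∧ 2 ≤ N.outDeg v) ∨ (N.outDeg v = 1 ∧ 2 ≤ N.inDeg v)

/-- `N` has no shortcuts: no arc `(u,v)` such that there is also a directed path
from `u` to `v` of length at least 2 (i.e. a path-list with at least 3 entries). -/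
def NoShortcuts (N : Net V) : Prop :=
  ∀ u v : V, N.arc u v → ¬ ∃ l : List V, N.IsPathFrom u v l ∧ 3 ≤ l.length

/-- Tree-child: every vertex is visible. -/
def TreeChild (N : Net V) : Prop := ∀ v ∈ N.verts, N.Visible v

/-- Normal: tree-child with no shortcuts. -/
def Normal (N : Net V) : Prop := N.TreeChild ∧ N.NoShortcuts

/-- A tree: every vertex has in-degree at most 1. -/
def IsTree (N : Net V) : Prop := ∀ v ∈ N.verts, N.inDeg v ≤ 1

/-- The cluster of `v`: the set of leaves reachable from `v`. -/
def cluster (N : Net V) (v : V) : Set V := {x ∈ N.leaves | N.reach v x}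

/-- The identifying set of `v`: the set of leaves `x` such that every directed
path from the root to `x` passes through `v`. -/
def ident (N : Net V) (v : V) : Set V :=
  {x ∈ N.leaves | ∀ l : List V, N.IsPathFrom N.root x l → v ∈ l}

/-- A digraph isomorphism between two networks, given by the map `f`. -/
def NetEquiv (M : Net V) (M' : Net W) (f : V → W) : Prop :=
  Set.BijOn f M.verts M'.verts ∧
    ∀ u ∈ M.verts, ∀ v ∈ M.verts, (M.arc u v ↔ M'.arc (f u) (f v))

/-- Two networks over the same ambient type are equivalent relative to a leaf set
`X` if there is a digraph isomorphism between them fixing each element of `X`. -/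
def EquivOn (M M' : Net V) (X : Set V) : Prop :=
  ∃ f : V → V, NetEquiv M M' f ∧ ∀ x ∈ X, f x = x

/-- `N₁ ⊕ N₂` : disjoint copies of `N₁` and `N₂` under a new root (`none`). -/
def oplus {V₁ V₂ : Type*} (N₁ : Net V₁) (N₂ : Net V₂) : Net (Option (V₁ ⊕ V₂)) where
  verts := insert none
    ((fun v => some (Sum.inl v)) '' N₁.verts ∪ (fun v => some (Sum.inr v)) '' N₂.verts)
  root := none
  arc a b :=
    match a, b with
    | none, some (Sum.inl w) => w = N₁.root
    | none, some (Sum.inr w) => w = N₂.root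
    | some (Sum.inl u), some (Sum.inl w) => N₁.arc u w
    | some (Sum.inr u), some (Sum.inr w) => N₂.arc u w
    | _, _ => False

/-- `N₁ ⊗ N₂` : identify each leaf `x` of `N₁` with the root of its own copy of `N₂`;
the copy of a non-leaf vertex `u` of `N₁` is `Sum.inl u`, and the vertex `w` of the
copy of `N₂` attached at leaf `x` of `N₁` is `Sum.inr (x, w)`. -/
def otimes {V₁ V₂ : Type*} (N₁ : Net V₁) (N₂ : Net V₂) : Net (V₁ ⊕ V₁ × V₂) where
  verts := Sum.inl '' (N₁.verts \ N₁.leaves) ∪ Sum.inr '' (N₁.leaves ×ˢ N₂.verts)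
  root := Sum.inl N₁.root
  arc a b :=
    match a, b with
    | Sum.inl u, Sum.inl w => N₁.arc u w ∧ w ∉ N₁.leaves
    | Sum.inl u, Sum.inr (x, w) => x ∈ N₁.leaves ∧ N₁.arc u x ∧ w = N₂.root
    | Sum.inr (x, w), Sum.inr (x', w') => x = x' ∧ x ∈ N₁.leaves ∧ N₂.arc w w'
    | _, _ => False

end Net

/-- A hierarchy: a collection of sets any two of which are disjoint or nested. -/
def IsHierarchy {V : Type*} (C : Set (Set V)) : Prop :=
  ∀ A ∈ C, ∀ B ∈ C, A ∩ B = ∅ ∨ A ⊆ B ∨ B ⊆ A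

/-!
If `N` is normal then `Cov(N) = N`: an arc of `N` has no visible vertex strictly between its
ends because there is no shortcut, and a `Cov(N)`-arc `(u,v)` is an arc of `N` because the
first vertex after `u` on a path to `v` is visible. A phylogenetic network has no subdividing
vertices, so suppressing them changes nothing and `Ñ = Cov(N) = N`.

Conversely, a vertex that is subdividing in `Cov(N)` has an in-arc there, so it is visible and
would be a vertex of `N = Ñ`, which it cannot be. Hence nothing is suppressed, `Cov(N) = Ñ = N`,
and then every vertex of `N` is visible, while a shortcut `u → w ⇝ v` of an arc `(u,v)` would
put the visible vertex `w` strictly between `u` and `v` in `Cov(N)`.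
-/

attribute [ext] Net

namespace Net

variable {V : Type*} {N : Net V} {u v w : V}

open Relation

lemma exists_arc_of_inDeg_ne_zero (h : N.inDeg v ≠ 0) : ∃ u, N.arc u v :=
  Set.nonempty_of_ncard_ne_zero h

lemma IsPathFrom.reach {l : List V} (h : N.IsPathFrom u v l) : N.reach u v := by
  obtain ⟨hc, hh, hl⟩ := h
  cases l with
  | nil => cases hh
  | cons a t =>
    obtain rfl : a = u := Option.some.inj hh
    exact List.relationReflTransGen_of_exists_isChain_cons t hc
      (Option.some.inj ((List.getLast?_eq_some_getLast _).symm.trans hl))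

lemma exists_isPathFrom_three_le_length_iff :
    (∃ l, N.IsPathFrom u v l ∧ 3 ≤ l.length) ↔ ∃ w, N.arc u w ∧ TransGen N.arc w v := by
  constructor
  · rintro ⟨l, ⟨hc, hh, hl⟩, hlen⟩
    match l, hlen with
    | a :: w :: c :: t, _ =>
      obtain rfl : a = u := Option.some.inj hh
      replace hc : List.IsChain N.arc (a :: w :: c :: t) := hc
      rw [List.isChain_cons_cons, List.isChain_cons_cons] at hc
      rw [List.getLast?_cons_cons, List.getLast?_cons_cons] at hl
      exact ⟨w, hc.1, TransGen.head' hc.2.1 (IsPathFrom.reach ⟨hc.2.2, rfl, hl⟩)⟩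
  · rintro ⟨w, huw, hwv⟩
    obtain ⟨c, hwc, hcv⟩ := TransGen.head'_iff.1 hwv
    obtain ⟨t, hc, hl⟩ := List.exists_isChain_cons_of_relationReflTransGen hcv
    refine ⟨u :: w :: c :: t, ⟨?_, rfl, ?_⟩, by simp⟩
    · exact List.isChain_cons_cons.2 ⟨huw, List.isChain_cons_cons.2 ⟨hwc, hc⟩⟩
    · rw [List.getLast?_cons_cons, List.getLast?_cons_cons,
        List.getLast?_eq_some_getLast (List.cons_ne_nil _ _), hl]

lemma exists_isPathFrom_three_le_length_of_reach_of_reach (huw : N.reach u w)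
    (hwv : N.reach w v) (hwu : w ≠ u) (hwv' : w ≠ v) :
    ∃ l, N.IsPathFrom u v l ∧ 3 ≤ l.length := by
  obtain ⟨w', huw', hw'w⟩ := (huw.cases_head).resolve_left (Ne.symm hwu)
  have hwv_trans : TransGen N.arc w v :=
    (reflTransGen_iff_eq_or_transGen.1 hwv).resolve_left (Ne.symm hwv')
  exact exists_isPathFrom_three_le_length_iff.2 ⟨w', huw', TransGen.trans_right hw'w hwv_trans⟩

lemma exists_isPathFrom_interior_iff_arc {P : V → Prop} (hP : ∀ w, ¬ P w) :
    (∃ l, N.IsPathFrom u v l ∧ 2 ≤ l.length ∧ ∀ w ∈ l.tail.dropLast, P w) ↔ N.arc u v := by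
  constructor
  · rintro ⟨l, ⟨hc, hh, hl⟩, hlen, hint⟩
    have hnil : l.tail.dropLast = [] :=
      List.eq_nil_iff_forall_not_mem.2 fun w hw => hP w (hint w hw)
    have hlen2 : l.length = 2 := by
      have := congrArg List.length hnil
      simp only [List.length_dropLast, List.length_tail, List.length_nil] at this
      omega
    obtain ⟨a, b, rfl⟩ := List.length_eq_two.1 hlen2
    obtain rfl : a = u := Option.some.inj hh
    obtain rfl : b = v := Option.some.inj hl
    exact List.isChain_pair.1 hc
  · intro h
    exact ⟨[u, v], ⟨List.isChain_pair.2 h, rfl, rfl⟩, le_rfl, by simp⟩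

lemma normalise_eq_cov (h : ∀ w, ¬ N.cov.Subdividing w) : N.normalise = N.cov := by
  ext u v
  · exact and_iff_left (h u)
  · rfl
  · simp only [normalise, exists_isPathFrom_interior_iff_arc h]
    exact ⟨fun h' => h'.2.2, fun h' => ⟨⟨h'.1, h u⟩, ⟨h'.2.1, h v⟩, h'⟩⟩

lemma visible_of_cov_subdividing (h : N.cov.Subdividing w) : N.Visible w := by
  obtain ⟨u, hu⟩ := exists_arc_of_inDeg_ne_zero (N := N.cov) (h.1 ▸ one_ne_zero)
  exact hu.2.1

namespace IsPhylo

variable {X : Set V} (hN : N.IsPhylo X)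
include hN

lemma ne_of_arc (h : N.arc u v) : u ≠ v := by
  rintro rfl
  exact hN.acyclic h ReflTransGen.refl

lemma ne_of_transGen (h : TransGen N.arc u v) : u ≠ v := by
  rintro rfl
  obtain ⟨c, huc, hcu⟩ := TransGen.head'_iff.1 h
  exact hN.acyclic huc hcu

lemma not_subdividing (v : V) : ¬ N.Subdividing v := by
  rintro ⟨hin, hout⟩
  obtain ⟨u, huv⟩ := exists_arc_of_inDeg_ne_zero (hin ▸ one_ne_zero)
  have hv := (hN.arc_mem huv).2
  have hroot : v ≠ N.root := by
    rintro rfl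
    exact absurd hN.root_inDeg (hin ▸ one_ne_zero)
  have hleaf : v ∉ X := by
    rw [← hN.leaves_eq]
    exact fun h => absurd h.2 (hout ▸ one_ne_zero)
  rcases hN.interior_deg v hv hroot hleaf with ⟨-, h⟩ | ⟨-, h⟩ <;> omega

lemma cov_eq_self_of_normal (hnorm : N.Normal) : N.cov = N := by
  obtain ⟨htc, hns⟩ := hnorm
  ext u v
  · exact ⟨fun h => h.1, htc u⟩
  · rfl
  · constructor
    · rintro ⟨-, -, huv, hreach, hbetween⟩
      obtain ⟨w, huw, hwv⟩ := hreach.cases_head.resolve_left huv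
      rcases eq_or_ne w v with rfl | hwv'
      · exact huw
      · exact absurd ⟨w, htc w (hN.arc_mem huw).2, (hN.ne_of_arc huw).symm, hwv',
          ReflTransGen.single huw, hwv⟩ hbetween
    · intro h
      refine ⟨htc u (hN.arc_mem h).1, htc v (hN.arc_mem h).2, hN.ne_of_arc h,
        ReflTransGen.single h, ?_⟩
      rintro ⟨w, -, hwu, hwv, huw, hwv2⟩
      exact hns u v h (exists_isPathFrom_three_le_length_of_reach_of_reach huw hwv2 hwu hwv)

lemma normal_of_cov_eq_self (hcov : N.cov = N) : N.Normal := by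
  have hcovArc : ∀ {a b}, N.arc a b → N.cov.arc a b := fun h => by rwa [hcov]
  refine ⟨fun v hv => by rwa [← hcov] at hv, fun u v huv hshort => ?_⟩
  obtain ⟨w, huw, hwv⟩ := exists_isPathFrom_three_le_length_iff.1 hshort
  exact (hcovArc huv).2.2.2.2 ⟨w, (hcovArc huw).2.1, (hN.ne_of_arc huw).symm,
    hN.ne_of_transGen hwv, ReflTransGen.single huw, hwv.to_reflTransGen⟩

end IsPhylo

end Net

/-- The normalisation `Ñ` of a rooted phylogenetic network `N` equals
`N` (same vertex set, arc set and root) if and only if `N` is a normal network. -/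
theorem stmt7 {V : Type*} (N : Net V) (X : Set V) (hN : N.IsPhylo X) :
    N.normalise = N ↔ N.Normal := by
  constructor
  · intro h
    have hsub : ∀ w, ¬ N.cov.Subdividing w := fun w hw => by
      have hmem : w ∈ N.normalise.verts := by
        rw [h]
        exact (Net.visible_of_cov_subdividing hw).1
      exact hmem.2 hw
    exact hN.normal_of_cov_eq_self ((Net.normalise_eq_cov hsub).symm.trans h)
  · intro hnorm
    have hcov := hN.cov_eq_self_of_normal hnorm
    have hsub : ∀ w, ¬ N.cov.Subdividing w := by
      rw [hcov]
      exact hN.not_subdividing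
    rw [Net.normalise_eq_cov hsub, hcov]
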